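/- Let N = 2n+1 be odd and D the equispaced trigonometric differentiation matrix. Then D satisfies its characteristic equation: D · ∏_{m=1}^{n} (D² + m² I) = 0. -/

import Mathlib

open Real Polynomial

/-- The equispaced trigonometric differentiation matrix, as a complex matrix. -/
noncomputable def Dmat (N : ℕ) : Matrix (Fin N) (Fin N) ℂ := fun j k =>
  if j = k then 0
  else (-1 : ℂ) ^ (j.1 + k.1) / (2 * (Real.sin (π * ((j.1 : ℝ) - (k.1 : ℝ)) / N) : ℂ))

namespace DmatAux
open Complex Finset

noncomputable def ζ (n : ℕ) : ℂ := Complex.exp (2 * ↑Real.pi * Complex.I / (2*n+1))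

lemma hζ (n : ℕ) : IsPrimitiveRoot (ζ n) (2*n+1) := by
  have := Complex.isPrimitiveRoot_exp (2*n+1) (by omega)
  simpa [ζ] using this

lemma zeta_ne_zero (n : ℕ) : ζ n ≠ 0 := Complex.exp_ne_zero _

lemma zeta_pow_ne_one {n : ℕ} {d : ℕ} (h1 : 0 < d) (h2 : d < 2*n+1) : ζ n ^ d ≠ 1 :=
  (hζ n).pow_ne_one_of_pos_of_lt h1.ne' h2

lemma sum_geo (n : ℕ) (t : ℕ) (ht : 0 < t) (ht' : t < 2*n+1) :
    ∑ d ∈ range (2*n+1), (ζ n) ^ (d*t) = 0 := by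
  have h1 : (ζ n) ^ t ≠ 1 := zeta_pow_ne_one ht ht'
  calc ∑ d ∈ range (2*n+1), (ζ n) ^ (d*t) = ∑ d ∈ range (2*n+1), ((ζ n)^t) ^ d := by
        refine Finset.sum_congr rfl fun d _ => ?_; rw [← pow_mul, mul_comm]
    _ = (((ζ n)^t) ^ (2*n+1) - 1) / ((ζ n)^t - 1) := geom_sum_eq h1 _
    _ = 0 := by
        rw [← pow_mul, mul_comm t, pow_mul, (hζ n).pow_eq_one, one_pow]
        simp

lemma inv_pair (u : ℂ) (h0 : u ≠ 0) (h1 : u ≠ 1) : (1-u)⁻¹ + (1-u⁻¹)⁻¹ = 1 := by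
  have hs1 : 1 - u ≠ 0 := sub_ne_zero.2 (Ne.symm h1)
  have hs2 : 1 - u⁻¹ ≠ 0 := by
    rw [sub_ne_zero]; intro h; exact h1 (by rw [← inv_inv u, ← h, inv_one])
  rw [inv_eq_one_div, inv_eq_one_div, div_add_div _ _ hs1 hs2,
    div_eq_one_iff_eq (mul_ne_zero hs1 hs2)]
  field_simp
  ring

lemma pair_eq_one {n : ℕ} {d : ℕ} (h1 : 0 < d) (h2 : d < 2*n+1) :
    (1 - ζ n ^ d)⁻¹ + (1 - ζ n ^ (2*n+1-d))⁻¹ = 1 := by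
  have hinv : ζ n ^ (2*n+1-d) = (ζ n ^ d)⁻¹ := by
    have h : ζ n ^ (2*n+1-d) * ζ n ^ d = 1 := by
      rw [← pow_add, show 2*n+1-d+d = 2*n+1 by omega]
      exact (hζ n).pow_eq_one
    exact eq_inv_of_mul_eq_one_left h
  rw [hinv]
  exact inv_pair _ (pow_ne_zero _ (zeta_ne_zero n)) (zeta_pow_ne_one h1 h2)

lemma sum_inv (n : ℕ) : ∑ d ∈ Ico 1 (2*n+1), (1 - ζ n ^ d)⁻¹ = (n : ℂ) := by
  have hS : ∑ d ∈ Ico 1 (2*n+1), (1 - ζ n ^ d)⁻¹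
      = ∑ d ∈ Ico 1 (2*n+1), (1 - ζ n ^ (2*n+1-d))⁻¹ := by
    refine Finset.sum_nbij' (fun d => 2*n+1-d) (fun d => 2*n+1-d) ?_ ?_ ?_ ?_ ?_ <;>
      intro a ha <;> simp only [mem_Ico] at ha ⊢ <;> try omega
    rw [show 2*n+1-(2*n+1-a) = a from by omega]
  have key : (∑ d ∈ Ico 1 (2*n+1), (1 - ζ n ^ d)⁻¹) * 2 = 2*(n:ℂ) := by
    rw [mul_two]
    nth_rewrite 2 [hS]
    rw [← Finset.sum_add_distrib]
    rw [Finset.sum_congr rfl (fun d hd => pair_eq_one (by simp at hd; omega) (by simp at hd; omega))]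
    simp [mul_comm]
  exact mul_right_cancel₀ two_ne_zero (by rw [key]; ring)

lemma sum_S (n : ℕ) (m : ℕ) (h1 : 1 ≤ m) (h2 : m ≤ 2*n+1) :
    ∑ d ∈ Ico 1 (2*n+1), ζ n ^ (m*d) * (1 - ζ n ^ d)⁻¹ = (m : ℂ) - (n+1) := by
  have hterm : ∀ d ∈ Ico 1 (2*n+1), ζ n ^ (m*d) * (1 - ζ n ^ d)⁻¹
      = (1 - ζ n ^ d)⁻¹ - ∑ t ∈ range m, (ζ n ^ d) ^ t := by
    intro d hd
    simp only [mem_Ico] at hd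
    have hx : ζ n ^ d ≠ 1 := zeta_pow_ne_one hd.1 hd.2
    have hx0 : 1 - ζ n ^ d ≠ 0 := sub_ne_zero.2 (Ne.symm hx)
    have hx1 : ζ n ^ d - 1 ≠ 0 := sub_ne_zero.2 hx
    have hx0' : (-1 : ℂ) + ζ n ^ d ≠ 0 := by intro h; exact hx1 (by linear_combination h)
    rw [geom_sum_eq hx, mul_comm m d, pow_mul]
    field_simp
    ring
  rw [Finset.sum_congr rfl hterm, Finset.sum_sub_distrib, sum_inv, Finset.sum_comm]
  have hinner : ∀ t ∈ range m, ∑ d ∈ Ico 1 (2*n+1), (ζ n ^ d) ^ t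
      = if t = 0 then (2*n : ℂ) else -1 := by
    intro t ht
    simp only [mem_range] at ht
    rcases Nat.eq_zero_or_pos t with h0 | h0
    · subst h0; simp
    · rw [if_neg (by omega)]
      have hsplit : ∑ d ∈ range (2*n+1), (ζ n) ^ (d*t) = 0 := sum_geo n t h0 (by omega)
      have : ∑ d ∈ Ico 1 (2*n+1), (ζ n ^ d) ^ t = ∑ d ∈ Ico 1 (2*n+1), (ζ n) ^ (d*t) := by
        refine Finset.sum_congr rfl fun d _ => ?_; rw [← pow_mul]
      rw [this]
      have h01 : ∑ d ∈ range 1, (ζ n) ^ (d*t) = 1 := by simp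
      rw [Finset.sum_Ico_eq_sub _ (by omega : 1 ≤ 2*n+1), hsplit, h01]
      ring
  rw [Finset.sum_congr rfl hinner]
  obtain ⟨m', rfl⟩ : ∃ m', m = m'+1 := ⟨m-1, by omega⟩
  rw [Finset.sum_range_succ']
  have : ∀ i ∈ range m', (if i+1 = 0 then (2*n : ℂ) else -1) = -1 := by
    intro i _; simp
  rw [Finset.sum_congr rfl this, if_pos rfl]
  simp only [Finset.sum_const, card_range, nsmul_eq_mul]
  push_cast
  ring

lemma zeta_zpow_ne_one {n : ℕ} {d : ℤ} (hd : ¬ ((2*n+1 : ℕ) : ℤ) ∣ d) : ζ n ^ d ≠ 1 := by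
  rw [Ne, (hζ n).zpow_eq_one_iff_dvd]; exact hd

lemma eps_congr {n : ℕ} {a b : ℤ} (h : ((2*n+1 : ℕ) : ℤ) ∣ a - b) : ζ n ^ a = ζ n ^ b := by
  obtain ⟨c, hc⟩ := h
  have h1 : ζ n ^ ((2*n+1 : ℕ) : ℤ) = 1 := by
    rw [zpow_natCast]; exact (hζ n).pow_eq_one
  have : a = b + ((2*n+1 : ℕ) : ℤ) * c := by omega
  rw [this, zpow_add₀ (zeta_ne_zero n), zpow_mul, h1, one_zpow, mul_one]

lemma entry_formula (n : ℕ) (d : ℤ) (hd : ¬ ((2*n+1 : ℕ) : ℤ) ∣ d) :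
    (-1 : ℂ) ^ d / (2 * Complex.sin (Real.pi * d / (2*n+1))) =
      Complex.I * ζ n ^ ((n+1 : ℤ) * d) / (ζ n ^ d - 1) := by
  have hN : ((2*n+1 : ℕ) : ℂ) ≠ 0 := Nat.cast_ne_zero.2 (by omega)
  have hN' : (2*(n:ℂ)+1) ≠ 0 := by push_cast at hN ⊢; convert hN using 1
  set z : ℂ := (Real.pi : ℂ) * d / (2*n+1) with hz
  set w : ℂ := Complex.exp (z * Complex.I) with hw
  have hw0 : w ≠ 0 := Complex.exp_ne_zero _
  have hw2 : w ^ 2 = ζ n ^ d := by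
    rw [hw, ← Complex.exp_nat_mul]
    rw [show (2:ℕ) * (z * Complex.I) = (d:ℂ) * (2 * ↑Real.pi * Complex.I / (2*n+1)) by
      rw [hz]; push_cast; field_simp]
    rw [Complex.exp_int_mul]; rfl
  have hwN : w ^ (2*n+1) = (-1 : ℂ) ^ d := by
    rw [hw, ← Complex.exp_nat_mul]
    rw [show ((2*n+1:ℕ):ℂ) * (z * Complex.I) = (d:ℂ) * ((Real.pi:ℂ) * Complex.I) by
      rw [hz]; push_cast; field_simp]
    rw [Complex.exp_int_mul, Complex.exp_pi_mul_I]
  have hsin : 2 * Complex.sin z = (w⁻¹ - w) * Complex.I := by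
    rw [Complex.two_sin, hw, neg_mul, ← Complex.exp_neg]
  have hnum : ζ n ^ ((n+1:ℤ) * d) = w ^ (2*n+2) := by
    rw [show ((n:ℤ)+1) * d = d * ((n+1 : ℕ) : ℤ) by push_cast; ring, zpow_mul,
      zpow_natCast, ← hw2, ← pow_mul]
    norm_num; ring_nf
  have hne1 : ζ n ^ d ≠ 1 := zeta_zpow_ne_one hd
  have h2 : ζ n ^ d - 1 ≠ 0 := sub_ne_zero.2 hne1
  have h2' : w ^ 2 - 1 ≠ 0 := by rw [hw2]; exact h2
  have h1 : (w⁻¹ - w) * Complex.I ≠ 0 := by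
    apply mul_ne_zero _ Complex.I_ne_zero
    intro h
    apply h2'
    have h' := sub_eq_zero.1 h
    have hww : w * w = 1 := by nth_rewrite 1 [← h']; exact inv_mul_cancel₀ hw0
    linear_combination hww
  rw [← hwN, hsin, ← hw2, hnum, div_eq_div_iff h1 h2']
  field_simp
  ring_nf
  rw [Complex.I_sq]
  ring

lemma sub_coe_mod (n : ℕ) (j k : Fin (2*n+1)) :
    ((2*n+1 : ℕ):ℤ) ∣ (((j - k : Fin (2*n+1)).1 : ℤ) - ((j.1:ℤ) - (k.1:ℤ))) := by
  rcases j with ⟨j, hj⟩; rcases k with ⟨k, hk⟩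
  rw [Fin.sub_def]
  simp only
  have hk' : k ≤ 2*n+1 := by omega
  set X := (2*n+1 - k + j) % (2*n+1) with hX
  obtain ⟨q, hq⟩ : ∃ q, 2*n+1 - k + j = (2*n+1)*q + X :=
    ⟨(2*n+1 - k + j) / (2*n+1), ((Nat.div_add_mod _ _).symm.trans (by rw [hX]))⟩
  refine ⟨1 - (q:ℤ), ?_⟩
  zify [hk'] at hq
  push_cast
  linear_combination -hq

/-- Entry formula in `Fin` terms. -/
lemma Dmat_entry (n : ℕ) (j k : Fin (2*n+1)) (hjk : j ≠ k) :
    Dmat (2*n+1) j k =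
      Complex.I * ζ n ^ (((n:ℤ)+1) * ((j - k : Fin (2*n+1)).1 : ℤ))
        / (ζ n ^ (((j - k : Fin (2*n+1)).1 : ℤ)) - 1) := by
  set a : ℕ := (j - k : Fin (2*n+1)).1 with ha
  set d : ℤ := (j.1:ℤ) - (k.1:ℤ) with hd
  have hdvd : ((2*n+1 : ℕ):ℤ) ∣ ((a:ℤ) - d) := sub_coe_mod n j k
  have ha0 : a ≠ 0 := by
    intro h
    exact hjk (by
      have : j - k = 0 := Fin.ext (by simp only [Fin.val_zero]; exact h)
      have := sub_eq_zero.1 this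
      exact this)
  have haN : a < 2*n+1 := (j - k : Fin (2*n+1)).2
  have hnd : ¬ ((2*n+1 : ℕ):ℤ) ∣ d := by
    intro h
    have h2 : ((2*n+1 : ℕ):ℤ) ∣ (a:ℤ) := by
      have := dvd_add hdvd h
      simpa using this
    have hle := Int.le_of_dvd (by exact_mod_cast Nat.pos_of_ne_zero ha0) h2
    have : (2*n+1 : ℕ) ≤ a := by exact_mod_cast hle
    omega
  have key := entry_formula n d hnd
  have he1 : ζ n ^ (((n:ℤ)+1) * d) = ζ n ^ (((n:ℤ)+1) * (a:ℤ)) := by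
    refine eps_congr ?_
    rw [show ((n:ℤ)+1)*d - ((n:ℤ)+1)*(a:ℤ) = -(((n:ℤ)+1)*((a:ℤ)-d)) by ring]
    exact dvd_neg.mpr (hdvd.mul_left _)
  have he2 : ζ n ^ d = ζ n ^ ((a:ℤ)) := by
    refine eps_congr ?_
    rw [show d - (a:ℤ) = -((a:ℤ)-d) by ring]
    exact dvd_neg.mpr hdvd
  have hsin : ((Real.sin (Real.pi * ((j.1 : ℝ) - (k.1 : ℝ)) / ((2*n+1 : ℕ) : ℝ)) : ℝ) : ℂ)
      = Complex.sin (Real.pi * (d:ℂ) / (2*n+1)) := by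
    rw [Complex.ofReal_sin]
    congr 1
    push_cast [hd]
    ring
  have hsign : ((-1 : ℂ)) ^ (j.1 + k.1) = (-1 : ℂ) ^ d := by
    have hde : d = ((j.1 + k.1 : ℕ) : ℤ) - 2*(k.1:ℤ) := by push_cast [hd]; ring
    rw [hde, zpow_sub₀ (by norm_num : (-1:ℂ) ≠ 0), zpow_natCast]
    have hone : ((-1:ℂ)) ^ (2*(k.1:ℤ)) = 1 := by
      rw [zpow_mul]
      norm_num
    rw [hone, div_one]
  simp only [Dmat]
  rw [if_neg hjk, hsin, hsign, key, he1, he2]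

noncomputable def lam (n r : ℕ) : ℂ :=
  Complex.I * (if r ≤ n then (r:ℂ) else (r:ℂ) - (2*n+1))

lemma eigen (n r : ℕ) (hr : r < 2*n+1) :
    (Dmat (2*n+1)).mulVec (fun j : Fin (2*n+1) => ζ n ^ (j.1 * r))
      = lam n r • (fun j : Fin (2*n+1) => ζ n ^ (j.1 * r)) := by
  set m : ℕ := if r ≤ n then n+1-r else 3*n+2-r with hmdef
  have hm1 : 1 ≤ m := by rw [hmdef]; split_ifs <;> omega
  have hm2 : m ≤ 2*n+1 := by rw [hmdef]; split_ifs <;> omega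
  have hmz : ((2*n+1:ℕ):ℤ) ∣ (((n:ℤ)+1-(r:ℤ)) - (m:ℤ)) := by
    rw [hmdef]; split_ifs with h
    · exact ⟨0, by omega⟩
    · exact ⟨-1, by omega⟩
  have hlam : lam n r = Complex.I * ((n:ℂ)+1-(m:ℂ)) := by
    rw [lam, hmdef]; split_ifs with h
    · have hz : ((n+1-r:ℕ):ℤ) = (n:ℤ)+1-r := by omega
      have : ((n+1-r:ℕ):ℂ) = (n:ℂ)+1-(r:ℂ) := by
        exact_mod_cast congrArg (fun z : ℤ => (z:ℂ)) hz
      rw [this]; ring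
    · have hz : ((3*n+2-r:ℕ):ℤ) = 3*(n:ℤ)+2-r := by omega
      have : ((3*n+2-r:ℕ):ℂ) = 3*(n:ℂ)+2-(r:ℂ) := by
        exact_mod_cast congrArg (fun z : ℤ => (z:ℂ)) hz
      rw [this]; push_cast; ring
  funext j
  set F : ℕ → ℂ := fun a => if a = 0 then 0 else
      -(ζ n ^ (j.1*r) * (Complex.I * (ζ n ^ (m*a) * (1 - ζ n ^ a)⁻¹))) with hF
  simp only [Matrix.mulVec, dotProduct, Pi.smul_apply, smul_eq_mul]
  have hre : ∑ k, Dmat (2*n+1) j k * ζ n ^ (k.1 * r)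
      = ∑ d : Fin (2*n+1), Dmat (2*n+1) j (j - d) * ζ n ^ ((j - d).1 * r) := by
    rw [← Equiv.sum_comp (Equiv.subLeft j)
      (fun k => Dmat (2*n+1) j k * ζ n ^ (k.1 * r))]
    simp only [Equiv.subLeft_apply]
  rw [hre]
  have hterm : ∀ d : Fin (2*n+1),
      Dmat (2*n+1) j (j - d) * ζ n ^ ((j - d).1 * r) = F d.1 := by
    intro d
    by_cases hd0 : d = 0
    · subst hd0
      simp [Dmat, hF]
    · have hd1 : d.1 ≠ 0 := fun h => hd0 (Fin.ext (by simp only [Fin.val_zero]; exact h))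
      have hdlt : d.1 < 2*n+1 := d.2
      have hne : j ≠ j - d := by
        intro h
        apply hd0
        have h2 := sub_sub_cancel j d
        rw [← h, sub_self] at h2
        exact h2.symm
      have hDa := Dmat_entry n j (j - d) hne
      rw [sub_sub_cancel] at hDa
      have hv : ζ n ^ ((j - d).1 * r)
          = ζ n ^ ((j.1*r : ℕ) : ℤ) * ζ n ^ (-((d.1:ℤ))*(r:ℤ)) := by
        rw [← zpow_natCast (ζ n) ((j - d).1 * r), ← zpow_add₀ (zeta_ne_zero n)]
        refine eps_congr ?_
        rw [show (((j - d).1 * r : ℕ) : ℤ) - (((j.1*r : ℕ) : ℤ) + -((d.1:ℤ))*(r:ℤ))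
            = ((((j - d : Fin (2*n+1)).1:ℤ)) - ((j.1:ℤ)-(d.1:ℤ)))*(r:ℤ) from by push_cast; ring]
        exact (sub_coe_mod n j d).mul_right _
      have h1 : ζ n ^ (((n:ℤ)+1) * (d.1:ℤ)) * ζ n ^ (-((d.1:ℤ))*(r:ℤ))
          = ζ n ^ (m * d.1) := by
        rw [← zpow_add₀ (zeta_ne_zero n), ← zpow_natCast (ζ n) (m * d.1)]
        refine eps_congr ?_
        rw [show ((n:ℤ)+1) * (d.1:ℤ) + -((d.1:ℤ))*(r:ℤ) - ((m * d.1 : ℕ):ℤ)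
            = (((n:ℤ)+1-(r:ℤ)) - (m:ℤ)) * (d.1:ℤ) from by push_cast; ring]
        exact hmz.mul_right _
      have hden : ζ n ^ ((d.1:ℕ):ℤ) - 1 = -(1 - ζ n ^ (d.1:ℕ)) := by
        rw [zpow_natCast]; ring
      rw [hDa, hv, hF]
      simp only [if_neg hd1]
      rw [div_eq_mul_inv, hden, inv_neg, ← h1, zpow_natCast]
      ring
  rw [Finset.sum_congr rfl (fun d _ => hterm d), Fin.sum_univ_eq_sum_range F]
  have hsplit : ∑ a ∈ Finset.range (2*n+1), F a = ∑ a ∈ Finset.Ico 1 (2*n+1), F a := by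
    rw [Finset.range_eq_Ico,
      ← Finset.sum_Ico_consecutive _ (by omega : (0:ℕ) ≤ 1) (by omega : 1 ≤ 2*n+1)]
    have h0 : ∑ a ∈ Finset.Ico 0 1, F a = 0 := by simp [hF]
    rw [h0, zero_add]
  rw [hsplit]
  have hFa : ∀ a ∈ Finset.Ico 1 (2*n+1), F a
      = -(ζ n ^ (j.1*r) * Complex.I * (ζ n ^ (m*a) * (1 - ζ n ^ a)⁻¹)) := by
    intro a ha
    simp only [mem_Ico] at ha
    rw [hF]
    simp only [if_neg (by omega : ¬ a = 0)]
    ring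
  rw [Finset.sum_congr rfl hFa, Finset.sum_neg_distrib, ← Finset.mul_sum,
    sum_S n m hm1 hm2, hlam]
  ring

lemma pow_mulVec {N : ℕ} (D : Matrix (Fin N) (Fin N) ℂ) (x : Fin N → ℂ) (μ : ℂ)
    (h : D.mulVec x = μ • x) (k : ℕ) : (D^k).mulVec x = μ^k • x := by
  induction k with
  | zero => simp [Matrix.one_mulVec]
  | succ k ih =>
      rw [pow_succ', pow_succ', ← Matrix.mulVec_mulVec, ih, Matrix.mulVec_smul, h,
        smul_smul, mul_comm]

lemma aeval_mulVec {N : ℕ} (D : Matrix (Fin N) (Fin N) ℂ) (x : Fin N → ℂ) (μ : ℂ)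
    (h : D.mulVec x = μ • x) (p : Polynomial ℂ) :
    (Polynomial.aeval D p).mulVec x = Polynomial.eval μ p • x := by
  induction p using Polynomial.induction_on' with
  | add p q hp hq =>
      rw [map_add, Matrix.add_mulVec, hp, hq, Polynomial.eval_add, add_smul]
  | monomial k a =>
      rw [Polynomial.aeval_monomial, Polynomial.eval_monomial,
        Algebra.algebraMap_eq_smul_one, smul_mul_assoc, one_mul,
        Matrix.smul_mulVec, pow_mulVec D x μ h k, smul_smul]

/-- The polynomial vanishes at each eigenvalue. -/
lemma eval_lam (n r : ℕ) (hr : r < 2*n+1) :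
    Polynomial.eval (lam n r)
      (Polynomial.X * ∏ m ∈ Finset.Icc 1 n,
        (Polynomial.X ^ 2 + Polynomial.C ((m : ℂ) ^ 2))) = 0 := by
  rw [Polynomial.eval_mul, Polynomial.eval_X]
  by_cases h0 : r = 0
  · subst h0
    simp [lam]
  · rcases le_or_gt r n with h | h
    · have hmem : r ∈ Finset.Icc 1 n := by simp; omega
      rw [Polynomial.eval_prod]
      rw [Finset.prod_eq_zero hmem (by
        rw [Polynomial.eval_add, Polynomial.eval_pow, Polynomial.eval_X, Polynomial.eval_C,
          lam, if_pos h]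
        have : Complex.I^2 = -1 := Complex.I_sq
        ring_nf
        rw [Complex.I_sq]
        ring)]
      ring
    · have hmem : 2*n+1-r ∈ Finset.Icc 1 n := by simp; omega
      rw [Polynomial.eval_prod]
      rw [Finset.prod_eq_zero hmem (by
        rw [Polynomial.eval_add, Polynomial.eval_pow, Polynomial.eval_X, Polynomial.eval_C,
          lam, if_neg (by omega)]
        have hz : ((2*n+1-r:ℕ):ℤ) = 2*(n:ℤ)+1-r := by omega
        have hc : ((2*n+1-r:ℕ):ℂ) = 2*(n:ℂ)+1-(r:ℂ) := by
          exact_mod_cast congrArg (fun z : ℤ => (z:ℂ)) hz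
        rw [hc]
        ring_nf
        rw [Complex.I_sq]
        push_cast
        ring)]
      ring

end DmatAux

/-- `D` satisfies its characteristic equation `D ∏_{m=1}^n (D² + m² I) = 0`. -/
theorem Dmat_charpoly_eq_zero (n : ℕ) :
    Polynomial.aeval (Dmat (2 * n + 1))
      (Polynomial.X * ∏ m ∈ Finset.Icc 1 n,
        (Polynomial.X ^ 2 + Polynomial.C ((m : ℂ) ^ 2))) = 0 := by
  set p : Polynomial ℂ := Polynomial.X * ∏ m ∈ Finset.Icc 1 n,
      (Polynomial.X ^ 2 + Polynomial.C ((m : ℂ) ^ 2)) with hp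
  set M := Polynomial.aeval (Dmat (2 * n + 1)) p with hM
  set W : Matrix (Fin (2*n+1)) (Fin (2*n+1)) ℂ :=
    Matrix.vandermonde (fun r : Fin (2*n+1) => DmatAux.ζ n ^ r.1) with hW
  have hMW : M * W = 0 := by
    ext j r
    have hcol : ∀ k : Fin (2*n+1), W k r = DmatAux.ζ n ^ (k.1 * r.1) := by
      intro k
      rw [hW, Matrix.vandermonde]
      simp [← pow_mul]
    have h1 : (M * W) j r = (M.mulVec (fun k : Fin (2*n+1) => DmatAux.ζ n ^ (k.1 * r.1))) j := by
      rw [Matrix.mul_apply, Matrix.mulVec, dotProduct]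
      exact Finset.sum_congr rfl fun k _ => by rw [hcol k]
    rw [h1, hM, DmatAux.aeval_mulVec _ _ (DmatAux.lam n r.1) (DmatAux.eigen n r.1 r.2) p, DmatAux.eval_lam n r.1 r.2]
    simp
  have hdet : W.det ≠ 0 := by
    rw [hW, Matrix.det_vandermonde]
    refine Finset.prod_ne_zero_iff.2 fun i _ => Finset.prod_ne_zero_iff.2 fun k hk => ?_
    rw [Finset.mem_Ioi] at hk
    rw [sub_ne_zero]
    intro heq
    have := (DmatAux.hζ n).pow_inj k.2 i.2 heq
    exact absurd (Fin.ext this) (ne_of_gt hk)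
  have hunit : IsUnit W.det := isUnit_iff_ne_zero.2 hdet
  calc M = M * (W * W⁻¹) := by rw [Matrix.mul_nonsing_inv W hunit, mul_one]
    _ = (M * W) * W⁻¹ := by rw [mul_assoc]
    _ = 0 := by rw [hMW, zero_mul]
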